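/- Let (μ_n)_{n∈ℕ} and ν be Borel probability measures on ℝ^d such that d_convex(μ_n, ν) → 0 as n → ∞. Then μ_n converges weakly (in law) to ν. -/

import Mathlib

open MeasureTheory Filter
open scoped Topology ENNReal BigOperators

noncomputable section

/-- The convex distance between two measures on `ℝ^d`:
the supremum over all Borel convex subsets `C` of `|μ(C) − ν(C)|`. -/
def convexDist {d : ℕ} (μ ν : Measure (EuclideanSpace ℝ (Fin d))) : ℝ :=
  ⨆ C : {C : Set (EuclideanSpace ℝ (Fin d)) // Convex ℝ C ∧ MeasurableSet C},
    |(μ C.1).toReal - (ν C.1).toReal|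

end

/-! Convex Borel sets form a π-system containing arbitrarily small neighbourhoods (balls) of every
point, and `d_convex(μₙ, ν) → 0` gives `μₙ(C) → ν(C)` on each of them. By inclusion–exclusion this
convergence passes to finite unions of convex sets, which approximate every open set from inside;
the portmanteau theorem then yields weak convergence. -/

theorem isPiSystem_convex_measurableSet {E : Type*} [AddCommGroup E] [Module ℝ E]
    [MeasurableSpace E] : IsPiSystem {C : Set E | Convex ℝ C ∧ MeasurableSet C} :=
  fun _ hs _ ht _ => ⟨hs.1.inter ht.1, hs.2.inter ht.2⟩

theorem abs_measureReal_sub_le_convexDist {d : ℕ} {μ ν : Measure (EuclideanSpace ℝ (Fin d))}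
    [IsFiniteMeasure μ] [IsFiniteMeasure ν] {C : Set (EuclideanSpace ℝ (Fin d))}
    (hC : Convex ℝ C) (hCm : MeasurableSet C) :
    |μ.real C - ν.real C| ≤ convexDist μ ν := by
  refine le_ciSup (f := fun D : {D : Set _ // Convex ℝ D ∧ MeasurableSet D} =>
    |μ.real D.1 - ν.real D.1|) ⟨μ.real .univ + ν.real .univ, ?_⟩ ⟨C, hC, hCm⟩
  rintro _ ⟨D, rfl⟩
  have hμD : μ.real D.1 ≤ μ.real .univ := measureReal_mono (Set.subset_univ _)
  have hνD : ν.real D.1 ≤ ν.real .univ := measureReal_mono (Set.subset_univ _)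
  have : 0 ≤ μ.real D.1 := measureReal_nonneg
  have : 0 ≤ ν.real D.1 := measureReal_nonneg
  exact abs_sub_le_iff.2 ⟨by linarith, by linarith⟩

theorem tendsto_measureReal_of_tendsto_convexDist {ι : Type*} {l : Filter ι} {d : ℕ}
    {μ : ι → Measure (EuclideanSpace ℝ (Fin d))} {ν : Measure (EuclideanSpace ℝ (Fin d))}
    [∀ i, IsFiniteMeasure (μ i)] [IsFiniteMeasure ν]
    (h : Tendsto (fun i => convexDist (μ i) ν) l (𝓝 0))
    {C : Set (EuclideanSpace ℝ (Fin d))} (hC : Convex ℝ C) (hCm : MeasurableSet C) :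
    Tendsto (fun i => (μ i).real C) l (𝓝 (ν.real C)) :=
  tendsto_sub_nhds_zero_iff.1 <|
    squeeze_zero_norm (fun _ => abs_measureReal_sub_le_convexDist hC hCm) h

/-- If `d_convex(μ_n, ν) → 0` for Borel probability measures on `ℝ^d`,
then `μ_n` converges weakly (in law) to `ν`. -/
theorem convexDist_tendsto_zero_weak_convergence
    (d : ℕ) (μ : ℕ → Measure (EuclideanSpace ℝ (Fin d))) (ν : Measure (EuclideanSpace ℝ (Fin d)))
    (hμ : ∀ n, IsProbabilityMeasure (μ n)) (hν : IsProbabilityMeasure ν)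
    (h : Tendsto (fun n => convexDist (μ n) ν) atTop (𝓝 0)) :
    ∀ f : BoundedContinuousFunction (EuclideanSpace ℝ (Fin d)) ℝ,
      Tendsto (fun n => ∫ x, f x ∂(μ n)) atTop (𝓝 (∫ x, f x ∂ν)) := by
  let P : ℕ → ProbabilityMeasure (EuclideanSpace ℝ (Fin d)) := fun n => ⟨μ n, hμ n⟩
  let Q : ProbabilityMeasure (EuclideanSpace ℝ (Fin d)) := ⟨ν, hν⟩
  have hPQ : Tendsto P atTop (𝓝 Q) := by
    refine isPiSystem_convex_measurableSet.tendsto_probabilityMeasure_of_tendsto_of_mem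
      (fun _ hC => hC.2) (fun U hU x hx => ?_) (fun C hC => ?_)
    · obtain ⟨ε, hε, hball⟩ := Metric.isOpen_iff.1 hU x hx
      exact ⟨Metric.ball x ε, ⟨convex_ball x ε, measurableSet_ball⟩, Metric.ball_mem_nhds x hε,
        hball⟩
    · have : Tendsto (fun n => (P n : Measure _).real C) atTop (𝓝 ((Q : Measure _).real C)) :=
        tendsto_measureReal_of_tendsto_convexDist h hC.1 hC.2
      simpa using this
  exact ProbabilityMeasure.tendsto_iff_forall_integral_tendsto.1 hPQ
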